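/- arXiv:1610.09651 — 3 statements merged into one kernel-verified Lean document; each statement's English description precedes it below -/
import Mathlib

section
/- Let T : ℝⁿ → ℝⁿ be monotone and additively homogeneous, and assume there exist u₀ ∈ ℝⁿ and λ ∈ ℝ with T(u₀) = λe + u₀. Then there exists a retraction of ℝⁿ onto the eigenspace E(T) = { x : T(x) = λe + x } which is itself monotone and additively homogeneous: a map p : ℝⁿ → ℝⁿ that is monotone, additively homogeneous, satisfies p ∘ p = p and p(ℝⁿ) = E(T). Explicitly, when λ = 0 one may take p(x) = lim_{k→∞} T^k(q(x)) where q(x) = lim_{k→∞} inf_{ℓ ≥ k} T^ℓ(x) (componentwise), and all these limits exist. -/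
/-!
A monotone, additively homogeneous map `T` is nonexpansive for the sup norm, so once it has a
fixed point `u` every orbit stays within `dist x u` of `u`. The componentwise lower limit
`q x = liminf_k T^k x` then exists and satisfies `T (q x) ≤ q x`, so the iterates `T^k (q x)`
decrease to a fixed point `p x`. Both steps commute with translations along `e`, are monotone and
fix the fixed points of `T`, so `p` is the required retraction. The eigenvalue `λ` is reduced to
`λ = 0` by passing to `x ↦ T x - λ e`.
-/

open Filter Set Topology

/-- *Topical* maps in the sense of Gunawardena and Keane. -/
structure IsTopical {ι : Type*} (T : (ι → ℝ) → ι → ℝ) : Prop where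
  monotone : Monotone T
  map_add_const : ∀ (x : ι → ℝ) (c : ℝ), T (x + fun _ => c) = T x + fun _ => c

namespace IsTopical

variable {ι : Type*} {T : (ι → ℝ) → ι → ℝ}

theorem add_const (hT : IsTopical T) (a : ℝ) : IsTopical fun x => T x + fun _ => a where
  monotone _ _ hxy := add_le_add_left (hT.monotone hxy) _
  map_add_const x c := by rw [hT.map_add_const]; abel

theorem iterate (hT : IsTopical T) (k : ℕ) : IsTopical T^[k] := by
  induction k with
  | zero => exact ⟨monotone_id, fun _ _ => rfl⟩
  | succ k ih =>
    refine ⟨hT.monotone.iterate _, fun x c => ?_⟩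
    rw [Function.iterate_succ_apply', Function.iterate_succ_apply', ih.map_add_const,
      hT.map_add_const]

end IsTopical

section SupMetric

variable {ι : Type*} [Fintype ι]

theorem le_add_const_dist (x y : ι → ℝ) : x ≤ y + fun _ => dist x y := fun i => by
  have h := dist_le_pi_dist x y i
  rw [Real.dist_eq] at h
  simp only [Pi.add_apply]
  linarith [le_abs_self (x i - y i)]

theorem IsTopical.dist_le {T : (ι → ℝ) → ι → ℝ} (hT : IsTopical T) (x y : ι → ℝ) :
    dist (T x) (T y) ≤ dist x y := by
  have hxy := hT.monotone (le_add_const_dist x y)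
  have hyx := hT.monotone (le_add_const_dist y x)
  rw [hT.map_add_const] at hxy hyx
  rw [dist_pi_le_iff dist_nonneg]
  intro i
  have h₁ := hxy i
  have h₂ := hyx i
  simp only [Pi.add_apply, dist_comm y x] at h₁ h₂
  rw [Real.dist_eq, abs_le]
  constructor <;> linarith

theorem IsTopical.continuous {T : (ι → ℝ) → ι → ℝ} (hT : IsTopical T) : Continuous T :=
  (LipschitzWith.of_dist_le_mul (K := 1) fun x y => by simpa using hT.dist_le x y).continuous

end SupMetric

noncomputable def tailInf (u : ℕ → ℝ) (k : ℕ) : ℝ := sInf {y | ∃ l, k ≤ l ∧ y = u l}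

section TailInf

variable {u : ℕ → ℝ} {k l : ℕ} {a : ℝ}

theorem tailInf_le (hu : BddBelow (range u)) (hkl : k ≤ l) : tailInf u k ≤ u l :=
  csInf_le (hu.mono fun _ ⟨m, _, hm⟩ => (⟨m, hm.symm⟩ : _ ∈ range u)) ⟨l, hkl, rfl⟩

theorem le_tailInf (h : ∀ l, k ≤ l → a ≤ u l) : a ≤ tailInf u k :=
  le_csInf ⟨u k, k, le_rfl, rfl⟩ fun _ ⟨l, hkl, hy⟩ => hy ▸ h l hkl

theorem tailInf_mono (hu : BddBelow (range u)) : Monotone (tailInf u) := fun _ _ hkk' =>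
  le_tailInf fun _ hl => tailInf_le hu (hkk'.trans hl)

theorem tailInf_le_tailInf {v : ℕ → ℝ} (hu : BddBelow (range u)) (huv : u ≤ v) :
    tailInf u k ≤ tailInf v k :=
  le_tailInf fun _ hl => (tailInf_le hu hl).trans (huv _)

theorem tailInf_const : tailInf (fun _ => a) k = a :=
  le_antisymm (tailInf_le ⟨a, forall_mem_range.2 fun _ => le_rfl⟩ le_rfl)
    (le_tailInf fun _ _ => le_rfl)

theorem tailInf_add_const (hu : BddBelow (range u)) (c : ℝ) :
    tailInf (fun l => u l + c) k = tailInf u k + c := by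
  have hu' : BddBelow (range fun l => u l + c) := by
    obtain ⟨b, hb⟩ := hu
    exact ⟨b + c, forall_mem_range.2 fun l => add_le_add_left (hb ⟨l, rfl⟩) c⟩
  refine le_antisymm ?_ (le_tailInf fun l hl => add_le_add_left (tailInf_le hu hl) c)
  have : tailInf (fun l => u l + c) k - c ≤ tailInf u k :=
    le_tailInf fun l hl => by linarith [tailInf_le hu' hl]
  linarith

theorem tendsto_tailInf (hb : BddBelow (range u)) (ha : BddAbove (range u)) :
    Tendsto (tailInf u) atTop (𝓝 (⨆ k, tailInf u k)) := by
  obtain ⟨b, hb'⟩ := ha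
  refine tendsto_atTop_ciSup (tailInf_mono hb) ⟨b, forall_mem_range.2 fun k => ?_⟩
  exact (tailInf_le hb le_rfl).trans (hb' ⟨k, rfl⟩)

end TailInf

section Retraction

variable {ι : Type*}

noncomputable def orbitLiminf (T : (ι → ℝ) → ι → ℝ) (x : ι → ℝ) : ι → ℝ :=
  fun i => ⨆ k, tailInf (fun l => T^[l] x i) k

noncomputable def fixedPointRetraction (T : (ι → ℝ) → ι → ℝ) (x : ι → ℝ) : ι → ℝ :=
  ⨅ k, T^[k] (orbitLiminf T x)

section FixedPoint

variable {T : (ι → ℝ) → ι → ℝ} {z : ι → ℝ}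

theorem orbitLiminf_of_map_eq (hz : T z = z) : orbitLiminf T z = z := by
  funext i
  simp only [orbitLiminf, Function.iterate_fixed hz, tailInf_const, ciSup_const]

theorem fixedPointRetraction_of_map_eq (hz : T z = z) :
    fixedPointRetraction T z = z := by
  simp only [fixedPointRetraction, orbitLiminf_of_map_eq hz, Function.iterate_fixed hz,
    ciInf_const]

end FixedPoint

namespace IsTopical

variable [Fintype ι] {T : (ι → ℝ) → ι → ℝ} {u : ι → ℝ}

theorem abs_iterate_apply_sub_le (hT : IsTopical T) (hu : T u = u) (x : ι → ℝ) (l : ℕ)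
    (i : ι) : |T^[l] x i - u i| ≤ dist x u := by
  rw [← Real.dist_eq]
  calc dist (T^[l] x i) (u i) ≤ dist (T^[l] x) (T^[l] u) := by
        rw [Function.iterate_fixed hu]; exact dist_le_pi_dist _ _ i
    _ ≤ dist x u := (hT.iterate l).dist_le x u

theorem bddBelow_range_iterate (hT : IsTopical T) (hu : T u = u) (x : ι → ℝ) :
    BddBelow (range fun l => T^[l] x) :=
  ⟨u - fun _ => dist x u, forall_mem_range.2 fun l i => by
    have := hT.abs_iterate_apply_sub_le hu x l i
    simp only [Pi.sub_apply]
    linarith [neg_abs_le (T^[l] x i - u i)]⟩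

theorem bddBelow_range_iterate_apply (hT : IsTopical T) (hu : T u = u) (x : ι → ℝ) (i : ι) :
    BddBelow (range fun l => T^[l] x i) := by
  obtain ⟨b, hb⟩ := hT.bddBelow_range_iterate hu x
  exact ⟨b i, forall_mem_range.2 fun l => hb ⟨l, rfl⟩ i⟩

theorem bddAbove_range_iterate_apply (hT : IsTopical T) (hu : T u = u) (x : ι → ℝ) (i : ι) :
    BddAbove (range fun l => T^[l] x i) :=
  ⟨u i + dist x u, forall_mem_range.2 fun l => by
    linarith [le_abs_self (T^[l] x i - u i), hT.abs_iterate_apply_sub_le hu x l i]⟩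

theorem tendsto_tailInf_orbitLiminf (hT : IsTopical T) (hu : T u = u) (x : ι → ℝ) (i : ι) :
    Tendsto (tailInf fun l => T^[l] x i) atTop (𝓝 (orbitLiminf T x i)) :=
  tendsto_tailInf (hT.bddBelow_range_iterate_apply hu x i)
    (hT.bddAbove_range_iterate_apply hu x i)

theorem monotone_orbitLiminf (hT : IsTopical T) (hu : T u = u) : Monotone (orbitLiminf T) :=
  fun x y hxy i => le_of_tendsto_of_tendsto' (hT.tendsto_tailInf_orbitLiminf hu x i)
    (hT.tendsto_tailInf_orbitLiminf hu y i) fun _ =>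
      tailInf_le_tailInf (hT.bddBelow_range_iterate_apply hu x i)
        fun l => (hT.iterate l).monotone hxy i

theorem orbitLiminf_add_const (hT : IsTopical T) (hu : T u = u) (x : ι → ℝ) (c : ℝ) :
    orbitLiminf T (x + fun _ => c) = orbitLiminf T x + fun _ => c := by
  funext i
  refine tendsto_nhds_unique (hT.tendsto_tailInf_orbitLiminf hu _ i) ?_
  have hshift : (tailInf fun l => T^[l] (x + fun _ => c) i) =
      fun k => tailInf (fun l => T^[l] x i) k + c := funext fun k => by
    simp only [(hT.iterate _).map_add_const, Pi.add_apply]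
    exact tailInf_add_const (hT.bddBelow_range_iterate_apply hu x i) c
  rw [hshift]
  exact (hT.tendsto_tailInf_orbitLiminf hu x i).add_const c

theorem map_orbitLiminf_le (hT : IsTopical T) (hu : T u = u) (x : ι → ℝ) :
    T (orbitLiminf T x) ≤ orbitLiminf T x := by
  set A : ℕ → ι → ℝ := fun k i => tailInf (fun l => T^[l] x i) k
  have hA : Tendsto A atTop (𝓝 (orbitLiminf T x)) :=
    tendsto_pi_nhds.2 (hT.tendsto_tailInf_orbitLiminf hu x)
  -- `A k ≤ T^l x` for `l ≥ k`, hence `T (A k) ≤ T^(l+1) x`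
  have hstep : ∀ k, T (A k) ≤ A (k + 1) := fun k i => le_tailInf fun m hm => by
    obtain ⟨l, rfl⟩ := Nat.exists_eq_add_of_le' (Nat.zero_lt_of_lt hm)
    rw [Function.iterate_succ_apply']
    exact hT.monotone (fun j => tailInf_le (hT.bddBelow_range_iterate_apply hu x j)
      (Nat.le_of_succ_le_succ hm)) i
  exact le_of_tendsto_of_tendsto' ((hT.continuous.tendsto _).comp hA)
    (hA.comp (tendsto_add_atTop_nat 1)) hstep

theorem tendsto_iterate_fixedPointRetraction (hT : IsTopical T) (hu : T u = u) (x : ι → ℝ) :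
    Tendsto (fun k => T^[k] (orbitLiminf T x)) atTop (𝓝 (fixedPointRetraction T x)) :=
  tendsto_atTop_ciInf (hT.monotone.antitone_iterate_of_map_le (hT.map_orbitLiminf_le hu x))
    (hT.bddBelow_range_iterate hu _)

theorem map_fixedPointRetraction (hT : IsTopical T) (hu : T u = u) (x : ι → ℝ) :
    T (fixedPointRetraction T x) = fixedPointRetraction T x :=
  isFixedPt_of_tendsto_iterate (hT.tendsto_iterate_fixedPointRetraction hu x)
    hT.continuous.continuousAt

theorem monotone_fixedPointRetraction (hT : IsTopical T) (hu : T u = u) :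
    Monotone (fixedPointRetraction T) := fun x y hxy =>
  le_of_tendsto_of_tendsto' (hT.tendsto_iterate_fixedPointRetraction hu x)
    (hT.tendsto_iterate_fixedPointRetraction hu y) fun k =>
      (hT.iterate k).monotone (hT.monotone_orbitLiminf hu hxy)

theorem fixedPointRetraction_add_const (hT : IsTopical T) (hu : T u = u) (x : ι → ℝ) (c : ℝ) :
    fixedPointRetraction T (x + fun _ => c) = fixedPointRetraction T x + fun _ => c := by
  refine tendsto_nhds_unique (hT.tendsto_iterate_fixedPointRetraction hu _) ?_
  simp only [hT.orbitLiminf_add_const hu, (hT.iterate _).map_add_const]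
  exact (hT.tendsto_iterate_fixedPointRetraction hu x).add_const _

theorem fixedPointRetraction_comp_self (hT : IsTopical T) (hu : T u = u) :
    fixedPointRetraction T ∘ fixedPointRetraction T = fixedPointRetraction T :=
  funext fun x => fixedPointRetraction_of_map_eq (hT.map_fixedPointRetraction hu x)

theorem range_fixedPointRetraction (hT : IsTopical T) (hu : T u = u) :
    range (fixedPointRetraction T) = {x | T x = x} :=
  Subset.antisymm (range_subset_iff.2 (hT.map_fixedPointRetraction hu))
    fun z hz => ⟨z, fixedPointRetraction_of_map_eq hz⟩

end IsTopical

end Retraction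

theorem stmt2_general {n : ℕ} (T : (Fin n → ℝ) → (Fin n → ℝ))
    (hmono : ∀ x y : Fin n → ℝ, x ≤ y → T x ≤ T y)
    (hhom : ∀ (x : Fin n → ℝ) (c : ℝ), T (x + fun _ => c) = T x + fun _ => c)
    (u₀ : Fin n → ℝ) (lam : ℝ) (h : T u₀ = (fun _ => lam) + u₀) :
    (∃ p : (Fin n → ℝ) → (Fin n → ℝ),
      (∀ x y : Fin n → ℝ, x ≤ y → p x ≤ p y) ∧
      (∀ (x : Fin n → ℝ) (c : ℝ), p (x + fun _ => c) = p x + fun _ => c) ∧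
      p ∘ p = p ∧
      Set.range p = {x | T x = (fun _ => lam) + x}) ∧
    (lam = 0 →
      ∃ q p : (Fin n → ℝ) → (Fin n → ℝ),
        (∀ (x : Fin n → ℝ) (i : Fin n),
          Tendsto (fun k : ℕ => sInf {y : ℝ | ∃ l : ℕ, k ≤ l ∧ y = T^[l] x i})
            atTop (nhds (q x i))) ∧
        (∀ x : Fin n → ℝ, Tendsto (fun k : ℕ => T^[k] (q x)) atTop (nhds (p x))) ∧
        (∀ x y : Fin n → ℝ, x ≤ y → p x ≤ p y) ∧
        (∀ (x : Fin n → ℝ) (c : ℝ), p (x + fun _ => c) = p x + fun _ => c) ∧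
        p ∘ p = p ∧
        Set.range p = {x | T x = x}) := by
  have hT : IsTopical T := ⟨fun x y => hmono x y, hhom⟩
  refine ⟨?_, fun hlam => ?_⟩
  · set S := fun x => T x + fun _ => -lam
    have hS : IsTopical S := hT.add_const (-lam)
    have hu₀ : S u₀ = u₀ := by
      funext i
      simp only [S, h, Pi.add_apply]
      ring
    refine ⟨fixedPointRetraction S, fun _ _ hxy => hS.monotone_fixedPointRetraction hu₀ hxy,
      hS.fixedPointRetraction_add_const hu₀, hS.fixedPointRetraction_comp_self hu₀, ?_⟩
    rw [hS.range_fixedPointRetraction hu₀]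
    ext x
    simp only [mem_ofPred_eq, funext_iff, Pi.add_apply, S]
    exact forall_congr' fun i => ⟨fun hx => by linarith, fun hx => by linarith⟩
  · subst hlam
    have hu₀ : T u₀ = u₀ := h.trans (zero_add u₀)
    exact ⟨orbitLiminf T, fixedPointRetraction T, hT.tendsto_tailInf_orbitLiminf hu₀,
      hT.tendsto_iterate_fixedPointRetraction hu₀,
      fun _ _ hxy => hT.monotone_fixedPointRetraction hu₀ hxy,
      hT.fixedPointRetraction_add_const hu₀, hT.fixedPointRetraction_comp_self hu₀,
      hT.range_fixedPointRetraction hu₀⟩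

/-- existence of a monotone, additively homogeneous retraction of `ℝⁿ` onto
the eigenspace of a monotone additively homogeneous map with solvable ergodic equation;
when `λ = 0` an explicit retraction is obtained as
`p(x) = lim_k T^k(q(x))` with `q(x) = lim_k inf_{ℓ ≥ k} T^ℓ(x)` (componentwise),
and all these limits exist. -/
theorem stmt2 {n : ℕ} (hn : 0 < n) (T : (Fin n → ℝ) → (Fin n → ℝ))
    (hmono : ∀ x y : Fin n → ℝ, x ≤ y → T x ≤ T y)
    (hhom : ∀ (x : Fin n → ℝ) (c : ℝ), T (x + fun _ => c) = T x + fun _ => c)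
    (u₀ : Fin n → ℝ) (lam : ℝ) (h : T u₀ = (fun _ => lam) + u₀) :
    (∃ p : (Fin n → ℝ) → (Fin n → ℝ),
      (∀ x y : Fin n → ℝ, x ≤ y → p x ≤ p y) ∧
      (∀ (x : Fin n → ℝ) (c : ℝ), p (x + fun _ => c) = p x + fun _ => c) ∧
      p ∘ p = p ∧
      Set.range p = {x | T x = (fun _ => lam) + x}) ∧
    (lam = 0 →
      ∃ q p : (Fin n → ℝ) → (Fin n → ℝ),
        (∀ (x : Fin n → ℝ) (i : Fin n),
          Tendsto (fun k : ℕ => sInf {y : ℝ | ∃ l : ℕ, k ≤ l ∧ y = T^[l] x i})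
            atTop (nhds (q x i))) ∧
        (∀ x : Fin n → ℝ, Tendsto (fun k : ℕ => T^[k] (q x)) atTop (nhds (p x))) ∧
        (∀ x y : Fin n → ℝ, x ≤ y → p x ≤ p y) ∧
        (∀ (x : Fin n → ℝ) (c : ℝ), p (x + fun _ => c) = p x + fun _ => c) ∧
        p ∘ p = p ∧
        Set.range p = {x | T x = x}) :=
  stmt2_general T hmono hhom u₀ lam h
end

section
/- Let T : ℝⁿ → ℝⁿ be a perfect-information finite Shapley operator. Assume T admits an invariant half-line with direction ν, i.e., there are u, ν ∈ ℝⁿ and α₀ ∈ ℝ with T(u + αν) = u + (α+1)ν for all α ≥ α₀, and assume likewise that each reduced operator T^σ admits an invariant half-line (these hypotheses hold automatically by Kohlberg's theorem). Then the upper mean payoff 𝜒̄(T) := max_{1≤i≤n} ν_i satisfies 𝜒̄(T) = min_σ max { ⟨m, r^{στ}⟩ : τ a policy of player Max, m ∈ M(P^{στ}) }, where the minimum is over all policies σ of player Min. -/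
/-- Perfect-information finite Shapley operator. -/
noncomputable def shapleyOp {n : ℕ} (A : Fin n → Type) [∀ i, Fintype (A i)] [∀ i, Nonempty (A i)]
    (B : ∀ i, A i → Type) [∀ i a, Fintype (B i a)] [∀ i a, Nonempty (B i a)]
    (r : ∀ i, ∀ a : A i, B i a → ℝ) (P : ∀ i, ∀ a : A i, B i a → Fin n → ℝ) :
    (Fin n → ℝ) → (Fin n → ℝ) :=
  fun x i => ⨅ a : A i, ⨆ b : B i a, (r i a b + ∑ j, P i a b j * x j)

/-- Reduced Shapley operator `T^σ` obtained by fixing a policy `σ` of player Min. -/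
noncomputable def reducedOp {n : ℕ} (A : Fin n → Type)
    (B : ∀ i, A i → Type) [∀ i a, Fintype (B i a)] [∀ i a, Nonempty (B i a)]
    (r : ∀ i, ∀ a : A i, B i a → ℝ) (P : ∀ i, ∀ a : A i, B i a → Fin n → ℝ)
    (σ : ∀ i, A i) : (Fin n → ℝ) → (Fin n → ℝ) :=
  fun x i => ⨆ b : B i (σ i), (r i (σ i) b + ∑ j, P i (σ i) b j * x j)

/-- `m` is an invariant probability vector of the stochastic matrix `Q` (rows `Q i`). -/
def isInvProb {n : ℕ} (Q : Fin n → Fin n → ℝ) (m : Fin n → ℝ) : Prop :=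
  (∀ i, 0 ≤ m i) ∧ (∑ i, m i) = 1 ∧ ∀ j, ∑ i, m i * Q i j = m j

/-!
Since `T ≤ T^σ` and `T^σ` is monotone and commutes with adding constants, the invariant
half-line of `T` stays below that of `T^σ` up to an additive constant, so `ν ≤ ν^σ`.
Along the half-line of `T^σ` one policy `τ` of Max is optimal at two distinct points, which
forces `P^{στ} ν^σ = ν^σ` and `r^{στ} + P^{στ} u^σ = u^σ + ν^σ`. The set where `ν^σ` is
maximal is then closed for `P^{στ}`, and an invariant measure `m` carried by it has payoff
`⟨m, r^{στ}⟩ = ⟨m, ν^σ⟩ = max ν^σ`. Conversely, if `σ` is optimal for Min at a point `x` of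
the half-line of `T`, then `r^{στ} + P^{στ} x ≤ x + ν` for every `τ`, and pairing with
`m ∈ M(P^{στ})` gives `⟨m, r^{στ}⟩ ≤ ⟨m, ν⟩ ≤ max ν`.
-/

open Matrix

namespace Matrix

variable {ι : Type*} [Fintype ι] {Q : Matrix ι ι ℝ}

theorem dotProduct_le_iSup_of_mem_stdSimplex {m : ι → ℝ} (hm : m ∈ stdSimplex ℝ ι)
    (x : ι → ℝ) : m ⬝ᵥ x ≤ ⨆ i, x i :=
  calc m ⬝ᵥ x ≤ m ⬝ᵥ fun _ => ⨆ i, x i :=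
        dotProduct_le_dotProduct_of_nonneg_left (le_ciSup (Finite.bddAbove_range x)) hm.1
    _ = ⨆ i, x i := by simp [dotProduct, ← Finset.sum_mul, hm.2]

theorem dotProduct_add_mulVec_of_vecMul_eq {m : ι → ℝ} (hmQ : m ᵥ* Q = m) (c x : ι → ℝ) :
    m ⬝ᵥ (c + Q *ᵥ x) = m ⬝ᵥ c + m ⬝ᵥ x := by
  rw [dotProduct_add, dotProduct_mulVec, hmQ]

variable [DecidableEq ι]

theorem vecMul_eq_of_le_vecMul (hQ : Q ∈ rowStochastic ℝ ι) {w : ι → ℝ} (hw : w ≤ w ᵥ* Q) :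
    w ᵥ* Q = w := by
  have hmass : ∑ j, w j = ∑ j, (w ᵥ* Q) j := by
    simp only [vecMul, dotProduct]
    rw [Finset.sum_comm]
    simp [← Finset.mul_sum, sum_row_of_mem_rowStochastic hQ]
  funext j
  exact ((Finset.sum_eq_sum_iff_of_le fun i _ => hw i).mp hmass j (Finset.mem_univ j)).symm

theorem exists_stationary_of_mem_rowStochastic [Nonempty ι] (hQ : Q ∈ rowStochastic ℝ ι) :
    ∃ m ∈ stdSimplex ℝ ι, m ᵥ* Q = m := by
  have hdet : (Q - 1).det = 0 := by
    refine exists_mulVec_eq_zero_iff.mp ⟨1, one_ne_zero, ?_⟩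
    rw [sub_mulVec, one_vecMul_of_mem_rowStochastic hQ, one_mulVec, sub_self]
  obtain ⟨v, hv0, hv⟩ := exists_vecMul_eq_zero_iff.mpr hdet
  rw [vecMul_sub, vecMul_one, sub_eq_zero] at hv
  set w : ι → ℝ := fun i => |v i|
  -- `|v|` is subinvariant by the triangle inequality, hence invariant
  have hwQ : w ᵥ* Q = w := by
    refine vecMul_eq_of_le_vecMul hQ fun j => ?_
    calc w j = |(v ᵥ* Q) j| := by rw [hv]
      _ ≤ ∑ i, |v i * Q i j| := Finset.abs_sum_le_sum_abs _ _
      _ = (w ᵥ* Q) j := by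
        simp [w, vecMul, dotProduct, abs_mul, abs_of_nonneg (nonneg_of_mem_rowStochastic hQ)]
  have hpos : 0 < ∑ i, w i := by
    obtain ⟨i, hi⟩ := Function.ne_iff.mp hv0
    exact Finset.sum_pos' (fun _ _ => abs_nonneg _) ⟨i, Finset.mem_univ _, abs_pos.mpr hi⟩
  refine ⟨(∑ i, w i)⁻¹ • w, ⟨fun i => ?_, ?_⟩, by rw [smul_vecMul, hwQ]⟩
  · exact mul_nonneg (inv_nonneg.mpr hpos.le) (abs_nonneg _)
  · simp [← Finset.mul_sum, hpos.ne']

theorem exists_stationary_support_subset (hQ : Q ∈ rowStochastic ℝ ι) {S : Set ι} {i₀ : ι}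
    (hi₀ : i₀ ∈ S) (hS : ∀ i ∈ S, ∀ j ∉ S, Q i j = 0) :
    ∃ m ∈ stdSimplex ℝ ι, m ᵥ* Q = m ∧ ∀ j ∉ S, m j = 0 := by
  classical
  -- replacing the rows outside `S` by the row of `i₀` leaves no way into the complement of `S`
  set Q' : Matrix ι ι ℝ := fun i => if i ∈ S then Q i else Q i₀
  have hQ'S : ∀ i, ∀ j ∉ S, Q' i j = 0 := by
    intro i j hj
    by_cases hi : i ∈ S <;> simp [Q', hi, hS _ _ j hj, hS _ hi₀ j hj]
  have hQ' : Q' ∈ rowStochastic ℝ ι := by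
    refine mem_rowStochastic_iff_sum.mpr ⟨fun i j => ?_, fun i => ?_⟩ <;>
      by_cases hi : i ∈ S <;>
      simp [Q', hi, nonneg_of_mem_rowStochastic hQ, sum_row_of_mem_rowStochastic hQ]
  have : Nonempty ι := ⟨i₀⟩
  obtain ⟨m, hm, hmQ'⟩ := exists_stationary_of_mem_rowStochastic hQ'
  have hmS : ∀ j ∉ S, m j = 0 := fun j hj => by
    rw [← hmQ']
    simp [vecMul, dotProduct, hQ'S _ j hj]
  refine ⟨m, hm, ?_, hmS⟩
  conv_rhs => rw [← hmQ']
  funext j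
  refine Finset.sum_congr rfl fun i _ => ?_
  by_cases hi : i ∈ S
  · simp [Q', hi]
  · simp [hmS i hi]

theorem exists_stationary_dotProduct_eq_iSup [Nonempty ι] (hQ : Q ∈ rowStochastic ℝ ι)
    {h : ι → ℝ} (hh : Q *ᵥ h = h) :
    ∃ m ∈ stdSimplex ℝ ι, m ᵥ* Q = m ∧ m ⬝ᵥ h = ⨆ i, h i := by
  obtain ⟨i₀, hi₀⟩ := Finite.exists_max h
  -- `h i = ∑ j, Q i j * h j` is an average, so the set where `h` is maximal is closed
  have hclosed : ∀ i ∈ {i | h i = h i₀}, ∀ j ∉ {i | h i = h i₀}, Q i j = 0 := by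
    intro i (hi : h i = h i₀) j (hj : h j ≠ h i₀)
    have hsum : ∑ k, Q i k * (h i₀ - h k) = 0 := by
      have hQh : ∑ k, Q i k * h k = h i := congrFun hh i
      simp only [mul_sub, Finset.sum_sub_distrib, ← Finset.sum_mul,
        sum_row_of_mem_rowStochastic hQ, hQh, hi, one_mul, sub_self]
    have hterm := (Finset.sum_eq_zero_iff_of_nonneg fun k _ => mul_nonneg
      (nonneg_of_mem_rowStochastic hQ) (sub_nonneg.mpr (hi₀ k))).mp hsum j (Finset.mem_univ j)
    exact (mul_eq_zero.mp hterm).resolve_right fun h0 => hj (sub_eq_zero.mp h0).symm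
  obtain ⟨m, hm, hmQ, hmS⟩ :=
    exists_stationary_support_subset hQ (S := {i | h i = h i₀}) rfl hclosed
  refine ⟨m, hm, hmQ, ?_⟩
  rw [le_antisymm (ciSup_le hi₀) (le_ciSup (Finite.bddAbove_range h) i₀)]
  calc m ⬝ᵥ h = ∑ j, m j * h i₀ := Finset.sum_congr rfl fun j _ => by
        by_cases hj : h j = h i₀
        · rw [hj]
        · rw [hmS j hj, zero_mul, zero_mul]
    _ = h i₀ := by rw [← Finset.sum_mul, hm.2, one_mul]

end Matrix

theorem isInvProb_iff {n : ℕ} {Q : Matrix (Fin n) (Fin n) ℝ} {m : Fin n → ℝ} :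
    isInvProb Q m ↔ m ∈ stdSimplex ℝ (Fin n) ∧ m ᵥ* Q = m :=
  ⟨fun ⟨h0, h1, h2⟩ => ⟨⟨h0, h1⟩, funext h2⟩, fun ⟨⟨h0, h1⟩, h2⟩ => ⟨h0, h1, congrFun h2⟩⟩

def HasInvariantHalfLine {ι : Type*} (f : (ι → ℝ) → ι → ℝ) (u ν : ι → ℝ) (α₀ : ℝ) : Prop :=
  ∀ α ≥ α₀, f (u + α • ν) = u + (α + 1) • ν

theorem nonpos_of_forall_nsmul_le {a b : ℝ} (h : ∀ k : ℕ, k • a ≤ b) : a ≤ 0 := by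
  by_contra! ha
  obtain ⟨k, hk⟩ := Archimedean.arch (b + a) ha
  linarith [h k]

theorem HasInvariantHalfLine.direction_le_of_le {ι : Type*} [Finite ι] {f g : (ι → ℝ) → ι → ℝ}
    {u ν v μ : ι → ℝ} {α β : ℝ} (hf : HasInvariantHalfLine f u ν α)
    (hg : HasInvariantHalfLine g v μ β) (hfg : ∀ x, f x ≤ g x) (hg_mono : Monotone g)
    (hg_add : ∀ x (c : ℝ), g (x + fun _ => c) = g x + fun _ => c) : ν ≤ μ := by
  obtain ⟨c, hc⟩ : ∃ c : ℝ, u + α • ν ≤ (v + β • μ) + fun _ => c := by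
    set w := u + α • ν - (v + β • μ)
    refine ⟨iSup w, fun i => ?_⟩
    have hwi : w i = (u + α • ν) i - (v + β • μ) i := rfl
    have := le_ciSup (Finite.bddAbove_range w) i
    show (u + α • ν) i ≤ (v + β • μ) i + iSup w
    linarith
  have hk : ∀ k : ℕ, u + (α + k) • ν ≤ (v + (β + k) • μ) + fun _ => c := by
    intro k
    induction k with
    | zero => simpa using hc
    | succ k ih =>
      calc u + (α + ↑(k + 1)) • ν = f (u + (α + k) • ν) := by
            rw [hf _ (by simp)]; push_cast; ring_nf
        _ ≤ g (u + (α + k) • ν) := hfg _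
        _ ≤ g ((v + (β + k) • μ) + fun _ => c) := hg_mono ih
        _ = (v + (β + ↑(k + 1)) • μ) + fun _ => c := by
            rw [hg_add, hg _ (by simp)]; push_cast; ring_nf
  intro i
  refine sub_nonpos.mp
    (nonpos_of_forall_nsmul_le (b := v i + β * μ i + c - u i - α * ν i) fun k => ?_)
  have := hk k i
  simp only [Pi.add_apply, Pi.smul_apply, smul_eq_mul, nsmul_eq_mul] at this ⊢
  linarith

theorem eq_and_eq_of_add_smul_eq_add_smul {K M : Type*} [Field K] [AddCommGroup M] [Module K M]
    {a b c d : M} {s t : K} (hst : s ≠ t) (hs : a + s • b = c + s • d)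
    (ht : a + t • b = c + t • d) : a = c ∧ b = d := by
  have hbd : b = d := by
    have h : (s - t) • (b - d) = 0 := by
      rw [smul_sub, sub_smul, sub_smul]
      linear_combination (norm := module) hs - ht
    exact sub_eq_zero.mp ((smul_eq_zero.mp h).resolve_left (sub_ne_zero.mpr hst))
  subst hbd
  exact ⟨add_right_cancel hs, rfl⟩

section Game

variable {n : ℕ} {A : Fin n → Type} {B : ∀ i, A i → Type} {r : ∀ i, ∀ a : A i, B i a → ℝ}
  {P : ∀ i, ∀ a : A i, B i a → Fin n → ℝ}

def policyMatrix (P : ∀ i, ∀ a : A i, B i a → Fin n → ℝ) (σ : ∀ i, A i)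
    (τ : ∀ i, ∀ a : A i, B i a) : Matrix (Fin n) (Fin n) ℝ :=
  fun i => P i (σ i) (τ i (σ i))

def policyReward (r : ∀ i, ∀ a : A i, B i a → ℝ) (σ : ∀ i, A i)
    (τ : ∀ i, ∀ a : A i, B i a) : Fin n → ℝ :=
  fun i => r i (σ i) (τ i (σ i))

def stationaryPayoffs (r : ∀ i, ∀ a : A i, B i a → ℝ) (P : ∀ i, ∀ a : A i, B i a → Fin n → ℝ)
    (σ : ∀ i, A i) : Set ℝ :=
  {v | ∃ τ m, isInvProb (policyMatrix P σ τ) m ∧ v = m ⬝ᵥ policyReward r σ τ}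

theorem policyMatrix_mem_rowStochastic (hP : ∀ i a b, (∀ j, 0 ≤ P i a b j) ∧ ∑ j, P i a b j = 1)
    (σ : ∀ i, A i) (τ : ∀ i, ∀ a : A i, B i a) : policyMatrix P σ τ ∈ rowStochastic ℝ (Fin n) :=
  mem_rowStochastic_iff_sum.mpr ⟨fun _ => (hP _ _ _).1, fun _ => (hP _ _ _).2⟩

theorem stationaryPayoffs_nonempty [NeZero n] [∀ i a, Nonempty (B i a)]
    (hP : ∀ i a b, (∀ j, 0 ≤ P i a b j) ∧ ∑ j, P i a b j = 1) (σ : ∀ i, A i) :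
    (stationaryPayoffs r P σ).Nonempty := by
  let τ : ∀ i, ∀ a : A i, B i a := fun _ _ => Classical.arbitrary _
  obtain ⟨m, hm, hmQ⟩ :=
    exists_stationary_of_mem_rowStochastic (policyMatrix_mem_rowStochastic hP σ τ)
  exact ⟨_, τ, m, isInvProb_iff.mpr ⟨hm, hmQ⟩, rfl⟩

theorem bddAbove_stationaryPayoffs [∀ i, Finite (A i)] [∀ i a, Finite (B i a)] (σ : ∀ i, A i) :
    BddAbove (stationaryPayoffs r P σ) := by
  obtain ⟨C, hC⟩ := Finite.bddAbove_range fun τ : ∀ i, ∀ a : A i, B i a =>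
    ⨆ i, policyReward r σ τ i
  refine ⟨C, ?_⟩
  rintro v ⟨τ, m, hm, rfl⟩
  exact (dotProduct_le_iSup_of_mem_stdSimplex (isInvProb_iff.mp hm).1 _).trans (hC ⟨τ, rfl⟩)

variable [∀ i a, Fintype (B i a)] [∀ i a, Nonempty (B i a)]

theorem policyReward_add_mulVec_le_reducedOp (σ : ∀ i, A i) (τ : ∀ i, ∀ a : A i, B i a)
    (x : Fin n → ℝ) :
    policyReward r σ τ + policyMatrix P σ τ *ᵥ x ≤ reducedOp A B r P σ x := fun i =>
  le_ciSup (f := fun b => r i (σ i) b + P i (σ i) b ⬝ᵥ x) (Finite.bddAbove_range _) (τ i (σ i))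

theorem exists_policyReward_add_mulVec_eq_reducedOp (σ : ∀ i, A i) (x : Fin n → ℝ) :
    ∃ τ, policyReward r σ τ + policyMatrix P σ τ *ᵥ x = reducedOp A B r P σ x := by
  choose τ hτ using fun i a => Finite.exists_max fun b : B i a => r i a b + P i a b ⬝ᵥ x
  exact ⟨τ, le_antisymm (policyReward_add_mulVec_le_reducedOp σ τ x)
    fun i => ciSup_le (hτ i (σ i))⟩

theorem reducedOp_monotone (hP : ∀ i a b, (∀ j, 0 ≤ P i a b j) ∧ ∑ j, P i a b j = 1)
    (σ : ∀ i, A i) : Monotone (reducedOp A B r P σ) := fun _ _ hxy _ =>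
  ciSup_mono (Finite.bddAbove_range _) fun _ =>
    add_le_add_right (dotProduct_le_dotProduct_of_nonneg_left hxy (hP _ _ _).1) _

theorem reducedOp_add_const (hP : ∀ i a b, (∀ j, 0 ≤ P i a b j) ∧ ∑ j, P i a b j = 1)
    (σ : ∀ i, A i) (x : Fin n → ℝ) (c : ℝ) :
    reducedOp A B r P σ (x + fun _ => c) = reducedOp A B r P σ x + fun _ => c := by
  funext i
  have hPc : ∀ b, P i (σ i) b ⬝ᵥ (x + fun _ => c) = P i (σ i) b ⬝ᵥ x + c := fun b => by
    rw [dotProduct_add]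
    simp [dotProduct, ← Finset.sum_mul, (hP _ _ _).2]
  show (⨆ b, r i (σ i) b + P i (σ i) b ⬝ᵥ (x + fun _ => c))
    = (⨆ b, r i (σ i) b + P i (σ i) b ⬝ᵥ x) + c
  simp only [hPc, ← add_assoc]
  exact (ciSup_add (Finite.bddAbove_range _) c).symm

theorem shapleyOp_le_reducedOp [∀ i, Fintype (A i)] [∀ i, Nonempty (A i)] (σ : ∀ i, A i)
    (x : Fin n → ℝ) : shapleyOp A B r P x ≤ reducedOp A B r P σ x := fun i =>
  ciInf_le (Finite.bddBelow_range _) (σ i)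

theorem exists_reducedOp_eq_shapleyOp [∀ i, Fintype (A i)] [∀ i, Nonempty (A i)]
    (x : Fin n → ℝ) : ∃ σ, reducedOp A B r P σ x = shapleyOp A B r P x := by
  choose σ hσ using fun i => Finite.exists_min fun a : A i => ⨆ b : B i a, r i a b + P i a b ⬝ᵥ x
  exact ⟨σ, le_antisymm (fun i => le_ciInf (hσ i)) (shapleyOp_le_reducedOp σ x)⟩

theorem exists_policy_of_hasInvariantHalfLine [∀ i, Finite (A i)] {σ : ∀ i, A i}
    {u ν : Fin n → ℝ} {α₀ : ℝ} (hσ : HasInvariantHalfLine (reducedOp A B r P σ) u ν α₀) :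
    ∃ τ, policyReward r σ τ + policyMatrix P σ τ *ᵥ u = u + ν ∧ policyMatrix P σ τ *ᵥ ν = ν := by
  choose τ hτ using fun k : ℕ =>
    exists_policyReward_add_mulVec_eq_reducedOp (r := r) (P := P) σ (u + (α₀ + k) • ν)
  -- some policy of Max is optimal at two distinct points of the half-line
  obtain ⟨k₁, k₂, hne, heq⟩ := Finite.exists_ne_map_eq_of_infinite τ
  have hline : ∀ k, τ k = τ k₁ → (policyReward r σ (τ k₁) + policyMatrix P σ (τ k₁) *ᵥ u)
      + (α₀ + k) • (policyMatrix P σ (τ k₁) *ᵥ ν) = (u + ν) + (α₀ + k) • ν := by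
    intro k hk
    have := hτ k
    rw [hσ _ (by simp), hk, mulVec_add, mulVec_smul] at this
    linear_combination (norm := module) this
  exact ⟨τ k₁, eq_and_eq_of_add_smul_eq_add_smul (by simpa using hne) (hline k₁ rfl)
    (hline k₂ heq.symm)⟩

theorem iSup_mem_stationaryPayoffs [NeZero n] [∀ i, Finite (A i)]
    (hP : ∀ i a b, (∀ j, 0 ≤ P i a b j) ∧ ∑ j, P i a b j = 1) {σ : ∀ i, A i} {u ν : Fin n → ℝ}
    {α₀ : ℝ} (hσ : HasInvariantHalfLine (reducedOp A B r P σ) u ν α₀) :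
    (⨆ i, ν i) ∈ stationaryPayoffs r P σ := by
  obtain ⟨τ, hr, hν⟩ := exists_policy_of_hasInvariantHalfLine hσ
  obtain ⟨m, hm, hmQ, hmν⟩ :=
    exists_stationary_dotProduct_eq_iSup (policyMatrix_mem_rowStochastic hP σ τ) hν
  refine ⟨τ, m, isInvProb_iff.mpr ⟨hm, hmQ⟩, ?_⟩
  have h := congrArg (m ⬝ᵥ ·) hr
  simp only [dotProduct_add_mulVec_of_vecMul_eq hmQ, dotProduct_add] at h
  linarith

theorem le_iSup_of_mem_stationaryPayoffs {σ : ∀ i, A i} {x ν : Fin n → ℝ}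
    (hx : reducedOp A B r P σ x ≤ x + ν) {v : ℝ} (hv : v ∈ stationaryPayoffs r P σ) :
    v ≤ ⨆ i, ν i := by
  obtain ⟨τ, m, hm, rfl⟩ := hv
  obtain ⟨hm, hmQ⟩ := isInvProb_iff.mp hm
  have h := dotProduct_le_dotProduct_of_nonneg_left
    ((policyReward_add_mulVec_le_reducedOp σ τ x).trans hx) hm.1
  rw [dotProduct_add_mulVec_of_vecMul_eq hmQ, dotProduct_add, add_comm (m ⬝ᵥ x)] at h
  exact (le_of_add_le_add_right h).trans (dotProduct_le_iSup_of_mem_stdSimplex hm ν)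

end Game

/-- characterization of the upper mean payoff
`𝜒̄(T) = min_σ max { ⟨m, r^{στ}⟩ : τ, m ∈ M(P^{στ}) }`. -/
theorem stmt3 {n : ℕ} (hn : 0 < n)
    (A : Fin n → Type) [∀ i, Fintype (A i)] [∀ i, Nonempty (A i)]
    (B : ∀ i, A i → Type) [∀ i a, Fintype (B i a)] [∀ i a, Nonempty (B i a)]
    (r : ∀ i, ∀ a : A i, B i a → ℝ) (P : ∀ i, ∀ a : A i, B i a → Fin n → ℝ)
    (hP : ∀ i a b, (∀ j, 0 ≤ P i a b j) ∧ ∑ j, P i a b j = 1)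
    (T : (Fin n → ℝ) → (Fin n → ℝ)) (hT : T = shapleyOp A B r P)
    (u ν : Fin n → ℝ) (α₀ : ℝ)
    (hhalf : ∀ α ≥ α₀, T (u + α • ν) = u + (α + 1) • ν)
    (hhalfσ : ∀ σ : ∀ i, A i, ∃ (uσ νσ : Fin n → ℝ) (ασ : ℝ),
      ∀ α ≥ ασ, reducedOp A B r P σ (uσ + α • νσ) = uσ + (α + 1) • νσ) :
    (⨆ i, ν i) =
      ⨅ σ : ∀ i, A i, sSup {v : ℝ | ∃ (τ : ∀ i, ∀ a : A i, B i a) (m : Fin n → ℝ),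
        isInvProb (fun i j => P i (σ i) (τ i (σ i)) j) m ∧
        v = ∑ i, m i * r i (σ i) (τ i (σ i))} := by
  subst hT
  have : NeZero n := ⟨hn.ne'⟩
  change (⨆ i, ν i) = ⨅ σ, sSup (stationaryPayoffs r P σ)
  apply le_antisymm
  · refine le_ciInf fun σ => ?_
    obtain ⟨uσ, νσ, ασ, hσ⟩ := hhalfσ σ
    have hνσ : ν ≤ νσ := HasInvariantHalfLine.direction_le_of_le hhalf hσ (shapleyOp_le_reducedOp σ)
      (reducedOp_monotone hP σ) (reducedOp_add_const hP σ)
    calc (⨆ i, ν i) ≤ ⨆ i, νσ i := ciSup_mono (Finite.bddAbove_range _) hνσ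
      _ ≤ _ := le_csSup (bddAbove_stationaryPayoffs σ) (iSup_mem_stationaryPayoffs hP hσ)
  · obtain ⟨σ, hσ⟩ := exists_reducedOp_eq_shapleyOp (B := B) (r := r) (P := P) (u + α₀ • ν)
    have hfix : reducedOp A B r P σ (u + α₀ • ν) = (u + α₀ • ν) + ν := by
      rw [hσ, hhalf α₀ le_rfl]
      module
    exact (ciInf_le (Finite.bddBelow_range _) σ).trans (csSup_le (stationaryPayoffs_nonempty hP σ)
      fun _ hv => le_iSup_of_mem_stationaryPayoffs hfix.le hv)
end

section
/- Let T : ℝⁿ → ℝⁿ be a perfect-information finite Shapley operator and let M ≥ 0. Then for every policy σ of player Min and every g ∈ ℝⁿ, the perturbed reduced operator g + T^σ ∘ R_M has an eigenvalue: there exist λ ∈ ℝ and u ∈ ℝⁿ with g + T^σ(R_M(u)) = λe + u. (In other words, T ∘ R_M satisfies the ergodicity assumption: each of its one-player reduced operators remains solvable under every state-dependent perturbation.) -/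
/-- The map `R_M`, `(R_M x)_i = max( x_i, max_j (−M + x_j) )`. -/
noncomputable def RM {n : ℕ} (M : ℝ) (x : Fin n → ℝ) : Fin n → ℝ :=
  fun i => max (x i) (⨆ j, (-M + x j))

/-!
Adding a constant `c` to `x` adds `c` to `R_M x` and `α c` to the discounted operator
`g + T^σ_α`, whose transition weights are scaled by `α`. Being monotone as well, `g + T^σ_α ∘ R_M`
is an `α`-contraction for the sup norm, so for `α < 1` it has a fixed point `x`. Splitting
`R_M x = v + (max x - M)` with `v` in the box `[0, M]ⁿ`, the constant passes through `T^σ_α`,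
so `v` is a fixed point of `v ↦ R_M w - (max w - M)`, `w = g + T^σ_α v`. A limit point of these
`v` as `α → 1` is a fixed point of the undiscounted map, and `u = g + T^σ v` is then an
eigenvector: `g + T^σ (R_M u) = u + (max u - M)`.
-/

open Filter Topology NNReal

section FiniteSup

variable {ι : Type*} [Finite ι] [Nonempty ι]

theorem ciSup_add_const {G : Type*} [ConditionallyCompleteLattice G] [AddGroup G]
    [AddRightMono G] (f : ι → G) (c : G) : ⨆ i, (f i + c) = (⨆ i, f i) + c :=
  ((OrderIso.addRight c).map_ciSup (Set.finite_range f).bddAbove).symm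

theorem continuous_ciSup {L X : Type*} [ConditionallyCompleteLattice L] [TopologicalSpace L]
    [ContinuousSup L] [TopologicalSpace X] {f : ι → X → L}
    (hf : ∀ i, Continuous (f i)) : Continuous fun x => ⨆ i, f i x := by
  have := Fintype.ofFinite ι
  simp only [← Finset.sup'_univ_eq_ciSup]
  exact Continuous.finset_sup'_apply _ fun i _ => hf i

end FiniteSup

theorem lipschitzWith_of_monotone_of_map_add_const {ι κ : Type*} [Fintype ι] [Fintype κ]
    {f : (ι → ℝ) → κ → ℝ} {K : ℝ≥0} (hf : Monotone f)
    (hadd : ∀ x (c : ℝ), f (x + fun _ => c) = f x + fun _ => K * c) : LipschitzWith K f := by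
  have hsub_le : ∀ x y i, f x i - f y i ≤ K * dist x y := by
    intro x y i
    have hxy : x ≤ y + fun _ => dist x y := fun j => by
      have := (abs_le.1 ((Real.dist_eq _ _).symm.trans_le (dist_le_pi_dist x y j))).2
      simp only [Pi.add_apply]
      linarith
    have := hf hxy i
    rw [hadd] at this
    simp only [Pi.add_apply] at this
    linarith
  refine LipschitzWith.of_dist_le_mul fun x y => (dist_pi_le_iff (by positivity)).2 fun i => ?_
  rw [Real.dist_eq, abs_sub_le_iff]
  exact ⟨hsub_le x y i, dist_comm x y ▸ hsub_le y x i⟩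

theorem IsCompact.exists_isFixedPt_of_tendsto {X Y : Type*} [TopologicalSpace X] [T2Space X]
    [FirstCountableTopology X] [TopologicalSpace Y] {K : Set X} (hK : IsCompact K)
    {Φ : Y → X → X} (hΦ : Continuous (Function.uncurry Φ)) {a : ℕ → Y} {a₀ : Y}
    (ha : Tendsto a atTop (𝓝 a₀)) {x : ℕ → X} (hxK : ∀ k, x k ∈ K)
    (hx : ∀ k, Function.IsFixedPt (Φ (a k)) (x k)) : ∃ x₀ ∈ K, Function.IsFixedPt (Φ a₀) x₀ := by
  obtain ⟨x₀, hx₀K, φ, hφ, hlim⟩ := hK.tendsto_subseq hxK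
  have hΦlim : Tendsto (fun l => Φ (a (φ l)) (x (φ l))) atTop (𝓝 (Φ a₀ x₀)) :=
    (hΦ.tendsto (a₀, x₀)).comp ((ha.comp hφ.tendsto_atTop).prodMk_nhds hlim)
  exact ⟨x₀, hx₀K, tendsto_nhds_unique hΦlim (hlim.congr fun l => (hx (φ l)).symm)⟩

section Bellman

variable {ι : Type*} [Fintype ι] {B : ι → Type*} [∀ i, Fintype (B i)]

-- `g + T^σ` with the transition weights scaled by the discount factor `α`.
noncomputable def bellmanOp (g : ι → ℝ) (r : ∀ i, B i → ℝ) (P : ∀ i, B i → ι → ℝ) (α : ℝ)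
    (x : ι → ℝ) : ι → ℝ :=
  fun i => g i + ⨆ b, (r i b + α * ∑ j, P i b j * x j)

variable (g : ι → ℝ) (r : ∀ i, B i → ℝ) {P : ∀ i, B i → ι → ℝ}

theorem monotone_bellmanOp (hP : ∀ i b j, 0 ≤ P i b j) {α : ℝ} (hα : 0 ≤ α) :
    Monotone (bellmanOp g r P α) := fun _ _ hxy i =>
  add_le_add_right (ciSup_mono (Set.finite_range _).bddAbove fun b =>
    add_le_add_right (mul_le_mul_of_nonneg_left
      (Finset.sum_le_sum fun j _ => mul_le_mul_of_nonneg_left (hxy j) (hP i b j)) hα) _) _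

variable [∀ i, Nonempty (B i)]

theorem bellmanOp_add_const (hP : ∀ i b, ∑ j, P i b j = 1) (α : ℝ) (x : ι → ℝ) (c : ℝ) :
    bellmanOp g r P α (x + fun _ => c) = bellmanOp g r P α x + fun _ => α * c := by
  funext i
  have hsum : ∀ b, r i b + α * ∑ j, P i b j * (x j + c)
      = r i b + α * ∑ j, P i b j * x j + α * c := fun b => by
    simp only [mul_add, Finset.sum_add_distrib, ← Finset.sum_mul, hP i b]
    ring
  simp only [bellmanOp, Pi.add_apply, hsum, ciSup_add_const]
  ring

theorem continuous_bellmanOp (P : ∀ i, B i → ι → ℝ) :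
    Continuous fun p : ℝ × (ι → ℝ) => bellmanOp g r P p.1 p.2 :=
  continuous_pi fun i => continuous_const.add (continuous_ciSup fun b => by fun_prop)

end Bellman

section RM

variable {n : ℕ} (M : ℝ)

noncomputable def normalizedRM (x : Fin n → ℝ) : Fin n → ℝ :=
  RM M x - fun _ => (⨆ k, x k) - M

theorem RM_eq_normalizedRM_add (x : Fin n → ℝ) :
    RM M x = normalizedRM M x + fun _ => (⨆ k, x k) - M :=
  (sub_add_cancel _ _).symm

variable [NeZero n]

theorem RM_apply (x : Fin n → ℝ) (j : Fin n) : RM M x j = max (x j) ((⨆ k, x k) - M) := by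
  simp only [RM, neg_add_eq_sub, sub_eq_add_neg, ciSup_add_const]

theorem monotone_RM : Monotone (RM (n := n) M) := fun _ _ hxy j => by
  simp only [RM_apply]
  exact max_le_max (hxy j) (sub_le_sub_right (ciSup_mono (Set.finite_range _).bddAbove hxy) M)

theorem RM_add_const (x : Fin n → ℝ) (c : ℝ) :
    RM M (x + fun _ => c) = RM M x + fun _ => c := by
  funext j
  simp only [RM_apply, Pi.add_apply, ciSup_add_const, add_sub_right_comm, max_add_add_right]

theorem normalizedRM_add_const (x : Fin n → ℝ) (c : ℝ) :
    normalizedRM M (x + fun _ => c) = normalizedRM M x := by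
  funext j
  simp only [normalizedRM, RM_add_const, Pi.add_apply, Pi.sub_apply, ciSup_add_const]
  ring

theorem normalizedRM_mem_Icc (hM : 0 ≤ M) (x : Fin n → ℝ) :
    normalizedRM M x ∈ Set.Icc 0 fun _ => M := by
  refine ⟨fun j => ?_, fun j => ?_⟩ <;> simp only [normalizedRM, Pi.sub_apply, RM_apply]
  · exact sub_nonneg.2 (le_max_right _ _)
  · have := le_ciSup (Set.finite_range x).bddAbove j
    exact sub_le_iff_le_add.2 (max_le (by linarith) (by linarith))

theorem continuous_normalizedRM : Continuous (normalizedRM (n := n) M) := by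
  have hsup : Continuous fun x : Fin n → ℝ => ⨆ k, x k := continuous_ciSup continuous_apply
  have hRM : Continuous (RM (n := n) M) := continuous_pi fun i =>
    (continuous_apply i).max (continuous_ciSup fun j => continuous_const.add (continuous_apply j))
  exact hRM.sub (continuous_pi fun _ => hsup.sub continuous_const)

end RM

section Eigenvector

variable {n : ℕ} [NeZero n] {B : Fin n → Type*} [∀ i, Fintype (B i)] [∀ i, Nonempty (B i)]
  (g : Fin n → ℝ) (r : ∀ i, B i → ℝ) {P : ∀ i, B i → Fin n → ℝ}
  (hP : ∀ i b, (∀ j, 0 ≤ P i b j) ∧ ∑ j, P i b j = 1) {M : ℝ}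

include hP

theorem exists_isFixedPt_bellmanOp_comp_RM {α : ℝ} (hα₀ : 0 ≤ α) (hα₁ : α < 1) :
    ∃ x, Function.IsFixedPt (bellmanOp g r P α ∘ RM M) x := by
  have hlip : LipschitzWith ⟨α, hα₀⟩ (bellmanOp g r P α ∘ RM M) :=
    lipschitzWith_of_monotone_of_map_add_const
      ((monotone_bellmanOp g r (fun i b => (hP i b).1) hα₀).comp (monotone_RM M))
      fun x c => by
        simp only [Function.comp_apply, RM_add_const,
          bellmanOp_add_const g r (fun i b => (hP i b).2)]
        rfl
  exact ⟨_, ContractingWith.fixedPoint_isFixedPt (hf := ⟨hα₁, hlip⟩)⟩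

theorem exists_isFixedPt_normalizedRM_comp_bellmanOp_of_lt_one (hM : 0 ≤ M) {α : ℝ}
    (hα₀ : 0 ≤ α) (hα₁ : α < 1) :
    ∃ v ∈ Set.Icc 0 fun _ => M, Function.IsFixedPt (normalizedRM M ∘ bellmanOp g r P α) v := by
  obtain ⟨x, hx⟩ := exists_isFixedPt_bellmanOp_comp_RM g r hP hα₀ hα₁
  refine ⟨normalizedRM M x, normalizedRM_mem_Icc M hM x, ?_⟩
  have hx' : bellmanOp g r P α (normalizedRM M x) + (fun _ => α * ((⨆ k, x k) - M)) = x := by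
    rw [← bellmanOp_add_const g r (fun i b => (hP i b).2), ← RM_eq_normalizedRM_add]
    exact hx
  change normalizedRM M (bellmanOp g r P α (normalizedRM M x)) = normalizedRM M x
  conv_rhs => rw [← hx', normalizedRM_add_const]

theorem exists_isFixedPt_normalizedRM_comp_bellmanOp (hM : 0 ≤ M) :
    ∃ v ∈ Set.Icc 0 fun _ => M, Function.IsFixedPt (normalizedRM M ∘ bellmanOp g r P 1) v := by
  set α : ℕ → ℝ := fun k => 1 - 1 / (k + 1)
  have hα₀ : ∀ k, 0 ≤ α k := fun k =>
    sub_nonneg.2 (div_le_one_of_le₀ (by linarith [k.cast_nonneg (α := ℝ)]) (by positivity))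
  have hα₁ : ∀ k, α k < 1 := fun k => sub_lt_self _ (by positivity)
  have hlim : Tendsto α atTop (𝓝 1) := by
    simpa [α] using tendsto_one_div_add_atTop_nhds_zero_nat.const_sub (1 : ℝ)
  choose v hvK hv using fun k =>
    exists_isFixedPt_normalizedRM_comp_bellmanOp_of_lt_one g r hP hM (hα₀ k) (hα₁ k)
  exact isCompact_Icc.exists_isFixedPt_of_tendsto
    (Φ := fun α => normalizedRM M ∘ bellmanOp g r P α)
    ((continuous_normalizedRM M).comp (continuous_bellmanOp g r P)) hlim hvK hv

theorem exists_eigenpair_bellmanOp_comp_RM (hM : 0 ≤ M) :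
    ∃ (lam : ℝ) (u : Fin n → ℝ), bellmanOp g r P 1 (RM M u) = (fun _ => lam) + u := by
  obtain ⟨v, -, hv⟩ := exists_isFixedPt_normalizedRM_comp_bellmanOp g r hP hM
  set u := bellmanOp g r P 1 v
  refine ⟨(⨆ k, u k) - M, u, ?_⟩
  rw [RM_eq_normalizedRM_add, show normalizedRM M u = v from hv,
    bellmanOp_add_const g r (fun i b => (hP i b).2), add_comm, one_mul]

end Eigenvector

theorem stmt10_general {n : ℕ} (hn : 0 < n)
    (A : Fin n → Type)
    (B : ∀ i, A i → Type) [∀ i a, Fintype (B i a)] [∀ i a, Nonempty (B i a)]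
    (r : ∀ i, ∀ a : A i, B i a → ℝ) (P : ∀ i, ∀ a : A i, B i a → Fin n → ℝ)
    (hP : ∀ i a b, (∀ j, 0 ≤ P i a b j) ∧ ∑ j, P i a b j = 1)
    (M : ℝ) (hM : 0 ≤ M) :
    ∀ (σ : ∀ i, A i) (g : Fin n → ℝ),
      ∃ (lam : ℝ) (u : Fin n → ℝ),
        g + reducedOp A B r P σ (RM M u) = (fun _ => lam) + u := by
  intro σ g
  have : NeZero n := ⟨hn.ne'⟩
  obtain ⟨lam, u, h⟩ :=
    exists_eigenpair_bellmanOp_comp_RM g (fun i => r i (σ i)) (fun i => hP i (σ i)) hM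
  refine ⟨lam, u, h ▸ ?_⟩
  funext i
  simp only [bellmanOp, reducedOp, one_mul, Pi.add_apply]

/-- `T ∘ R_M` satisfies the ergodicity assumption: for every policy `σ` of
player Min and every perturbation `g`, `g + T^σ ∘ R_M` has an eigenvalue. -/
theorem stmt10 {n : ℕ} (hn : 0 < n)
    (A : Fin n → Type) [∀ i, Fintype (A i)] [∀ i, Nonempty (A i)]
    (B : ∀ i, A i → Type) [∀ i a, Fintype (B i a)] [∀ i a, Nonempty (B i a)]
    (r : ∀ i, ∀ a : A i, B i a → ℝ) (P : ∀ i, ∀ a : A i, B i a → Fin n → ℝ)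
    (hP : ∀ i a b, (∀ j, 0 ≤ P i a b j) ∧ ∑ j, P i a b j = 1)
    (T : (Fin n → ℝ) → (Fin n → ℝ)) (hT : T = shapleyOp A B r P)
    (M : ℝ) (hM : 0 ≤ M) :
    ∀ (σ : ∀ i, A i) (g : Fin n → ℝ),
      ∃ (lam : ℝ) (u : Fin n → ℝ),
        g + reducedOp A B r P σ (RM M u) = (fun _ => lam) + u :=
  stmt10_general hn A B r P hP M hM
end
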